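/- arXiv:2303.16729 — 5 statements merged into one kernel-verified Lean document; each statement's English description precedes it below -/
import Mathlib

section
/- Let k ≥ 3 and m ≥ 0 be integers, let S_k be a k×(2^k−1) matrix over F_2 whose columns are exactly the 2^k−1 distinct nonzero vectors of F_2^k, let G be a k×n matrix over F_2 of rank k whose row space C has minimum distance d ≥ 1, and let G' = [S_k | ⋯ | S_k | G] be the k×(m(2^k−1)+n) matrix obtained by juxtaposing m copies of S_k with G, with row space C'. Then C' is a binary [m(2^k−1)+n, k] code with minimum distance exactly m·2^{k−1}+d, and C is a self-orthogonal Griesmer [n,k,d] code if and only if C' is a self-orthogonal Griesmer [m(2^k−1)+n, k, m·2^{k−1}+d] code. -/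
open Finset

/-- Hamming weight of a binary vector. -/
def wt {ι : Type*} [Fintype ι] (x : ι → ZMod 2) : ℕ :=
  (Finset.univ.filter fun i => x i ≠ 0).card

/-- A binary linear code is self-orthogonal if any two codewords are orthogonal. -/
def SelfOrthogonal {ι : Type*} [Fintype ι] (C : Submodule (ZMod 2) (ι → ZMod 2)) : Prop :=
  ∀ x ∈ C, ∀ y ∈ C, ∑ i, x i * y i = 0

/-- `C` has minimum distance exactly `d`: some nonzero codeword has weight `d`,
and every nonzero codeword has weight at least `d`. -/
def HasMinDist {ι : Type*} [Fintype ι] (C : Submodule (ZMod 2) (ι → ZMod 2)) (d : ℕ) : Prop :=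
  (∃ x ∈ C, x ≠ 0 ∧ wt x = d) ∧ ∀ x ∈ C, x ≠ 0 → d ≤ wt x

/-- The Griesmer function `g(k,d) = ∑_{i=0}^{k-1} ⌈d/2^i⌉` (ceiling division). -/
def griesmerBound (k d : ℕ) : ℕ :=
  ∑ i ∈ Finset.range k, (d + 2 ^ i - 1) / 2 ^ i

/-! Codewords of both codes are `a ᵥ* G` and `a ᵥ* G'` for `a : F₂ᵏ`, and each copy of `S_k`
contributes the values `a ⬝ᵥ v` for `v` running over the nonzero vectors of `F₂ᵏ`. A nonzero
functional `v ↦ a ⬝ᵥ v` is nonzero on exactly half of `F₂ᵏ` (translating by a vector on which it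
is `1` swaps its zeros and non-zeros), so every copy adds `2^(k-1)` to the weight of a nonzero
codeword. For `k ≥ 3` some `w ≠ 0` is orthogonal to both `a` and `b`; then `v ↦ (a ⬝ᵥ v)(b ⬝ᵥ v)`
is invariant under translation by `w`, its terms cancel in pairs, and the copies of `S_k` add
nothing to inner products. Finally `⌈(m 2^(k-1) + d)/2^i⌉ = m 2^(k-1-i) + ⌈d/2^i⌉` for `i < k`,
so the Griesmer bound grows by exactly `m (2^k - 1)`, the number of added columns. -/

open Matrix

section Translation

variable {V : Type*} [AddCommGroup V] [Fintype V]

lemma two_mul_card_filter_ne_zero [DecidableEq V] (f : V → ZMod 2) {w : V}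
    (hf : ∀ v, f (v + w) = f v + 1) :
    2 * #{v | f v ≠ 0} = Fintype.card V := by
  have hswap : #{v | f v = 0} = #{v | f v ≠ 0} :=
    card_equiv (Equiv.addRight w) fun v => by
      simp only [mem_filter, mem_univ, true_and, Equiv.coe_addRight, hf]
      generalize f v = x
      revert x; decide
  have hsplit := card_filter_add_card_filter_not (s := univ) fun v => f v ≠ 0
  simp only [not_not, hswap, card_univ] at hsplit
  omega

lemma sum_eq_zero_of_add_invariant [Module (ZMod 2) V] (f : V → ZMod 2) {w : V} (hw : w ≠ 0)
    (hf : ∀ v, f (v + w) = f v) : ∑ v, f v = 0 :=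
  sum_ninvolution (· + w) (fun v => by rw [hf, CharTwo.add_self_eq_zero])
    (fun _ _ => by simpa using hw) (fun _ => mem_univ _)
    (fun v => by
      rw [add_assoc, ← two_smul (ZMod 2) w, show (2 : ZMod 2) = 0 from rfl, zero_smul, add_zero])

end Translation

lemma exists_ne_zero_dotProduct_eq_zero_of_two_lt {K : Type*} [Field K] {k : ℕ} (hk : 2 < k)
    (a b : Fin k → K) : ∃ w ≠ 0, a ⬝ᵥ w = 0 ∧ b ⬝ᵥ w = 0 := by
  have hker : LinearMap.ker (of ![a, b]).mulVecLin ≠ ⊥ :=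
    LinearMap.ker_ne_bot_of_finrank_lt (by simpa using hk)
  obtain ⟨w, hw, hw0⟩ := Submodule.ne_bot_iff _ |>.mp hker
  exact ⟨w, hw0, congrFun hw 0, congrFun hw 1⟩

section Simplex

variable {k : ℕ} {S : Matrix (Fin k) (Fin (2 ^ k - 1)) (ZMod 2)}
  (hS : Set.range (fun j i => S i j) = {v : Fin k → ZMod 2 | v ≠ 0})
include hS

lemma sum_simplex_columns {M : Type*} [AddCommMonoid M] (F : (Fin k → ZMod 2) → M)
    (hF : F 0 = 0) : ∑ j, F (fun i => S i j) = ∑ v, F v := by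
  have hcol : ∀ j, (fun i => S i j) ≠ 0 := fun j =>
    (hS ▸ Set.mem_range_self (f := fun j i => S i j) j :)
  let e : Fin (2 ^ k - 1) → {v : Fin k → ZMod 2 // v ≠ 0} := fun j => ⟨_, hcol j⟩
  have he : Function.Bijective e := by
    refine (Fintype.bijective_iff_surjective_and_card e).mpr ⟨fun v => ?_, ?_⟩
    · obtain ⟨j, hj⟩ : v.1 ∈ Set.range fun j i => S i j := hS ▸ v.2
      exact ⟨j, Subtype.ext hj⟩
    · simp [Fintype.card_subtype_compl]
  rw [he.sum_comp (fun v => F v), ← sum_subtype (univ.erase 0) (by simp), sum_erase univ hF]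

lemma wt_vecMul_simplex {a : Fin k → ZMod 2} (ha : a ≠ 0) : wt (a ᵥ* S) = 2 ^ (k - 1) := by
  obtain ⟨t, ht⟩ := Function.ne_iff.mp ha
  have hat : a t = 1 := by
    revert ht; rw [Pi.zero_apply]; generalize a t = x; revert x; decide
  have hcount := two_mul_card_filter_ne_zero (a ⬝ᵥ ·) (w := Pi.single t 1) fun v => by
    rw [dotProduct_add, dotProduct_single, hat, mul_one]
  have hwt : wt (a ᵥ* S) = #{v | a ⬝ᵥ v ≠ 0} := by
    rw [wt, card_filter, card_filter]
    exact sum_simplex_columns hS (fun v => if a ⬝ᵥ v ≠ 0 then 1 else 0) (by simp)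
  have hpow : 2 ^ k = 2 * 2 ^ (k - 1) := by rw [← pow_succ']; congr; have := t.pos; omega
  simp only [Fintype.card_fun, ZMod.card, Fintype.card_fin] at hcount
  omega

lemma dotProduct_vecMul_simplex (hk : 3 ≤ k) (a b : Fin k → ZMod 2) :
    (a ᵥ* S) ⬝ᵥ (b ᵥ* S) = 0 := by
  obtain ⟨w, hw, haw, hbw⟩ := exists_ne_zero_dotProduct_eq_zero_of_two_lt hk a b
  calc (a ᵥ* S) ⬝ᵥ (b ᵥ* S) = ∑ v, (a ⬝ᵥ v) * (b ⬝ᵥ v) :=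
        sum_simplex_columns hS (fun v => (a ⬝ᵥ v) * (b ⬝ᵥ v)) (by simp)
    _ = 0 := sum_eq_zero_of_add_invariant _ hw fun v => by
        simp only [dotProduct_add, haw, hbw, add_zero]

end Simplex

section Juxtaposition

variable {ρ ι κ μ : Type*}

lemma vecMul_sumElim {R : Type*} [NonUnitalNonAssocSemiring R] [Fintype ρ] (a : ρ → R)
    (S : Matrix ρ ι R) (G : Matrix ρ κ R) :
    a ᵥ* (fun i => Sum.elim (fun p : μ × ι => S i p.2) (G i) : Matrix ρ (μ × ι ⊕ κ) R) =
      Sum.elim (fun p => (a ᵥ* S) p.2) (a ᵥ* G) := by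
  funext x
  cases x <;> rfl

variable [Fintype ι] [Fintype κ] [Fintype μ]

lemma wt_sumElim (x : ι → ZMod 2) (y : κ → ZMod 2) : wt (Sum.elim x y) = wt x + wt y := by
  simp only [wt, card_filter, Fintype.sum_sum_type]
  rfl

lemma wt_comp_snd (x : ι → ZMod 2) : wt (fun p : μ × ι => x p.2) = Fintype.card μ * wt x := by
  rw [wt, wt, card_filter, card_filter, Fintype.sum_prod_type, ← card_univ (α := μ)]
  exact sum_const_nat fun _ _ => rfl

lemma dotProduct_comp_snd {R : Type*} [NonUnitalNonAssocSemiring R] (x y : ι → R) :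
    (fun p : μ × ι => x p.2) ⬝ᵥ (fun p => y p.2) = Fintype.card μ • (x ⬝ᵥ y) := by
  simp only [dotProduct, Fintype.sum_prod_type, sum_const, card_univ]

end Juxtaposition

section GeneratorMatrix

variable {ρ ι κ : Type*} [Fintype ρ]

lemma mem_span_range_iff_exists_vecMul {G : Matrix ρ ι (ZMod 2)} {x : ι → ZMod 2} :
    x ∈ Submodule.span (ZMod 2) (Set.range G) ↔ ∃ a, a ᵥ* G = x := by
  simp only [vecMul_eq_sum]
  exact Submodule.mem_span_range_iff_exists_fun (ZMod 2) (v := (G : ρ → ι → ZMod 2))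

variable [Fintype ι] [Fintype κ]

lemma selfOrthogonal_span_range_iff (G : Matrix ρ ι (ZMod 2)) :
    SelfOrthogonal (Submodule.span (ZMod 2) (Set.range G)) ↔
      ∀ a b, (a ᵥ* G) ⬝ᵥ (b ᵥ* G) = 0 := by
  simp only [SelfOrthogonal, mem_span_range_iff_exists_vecMul, forall_exists_index,
    forall_apply_eq_imp_iff, dotProduct]

lemma hasMinDist_span_range_iff (G : Matrix ρ ι (ZMod 2)) (d : ℕ) :
    HasMinDist (Submodule.span (ZMod 2) (Set.range G)) d ↔
      (∃ a, a ᵥ* G ≠ 0 ∧ wt (a ᵥ* G) = d) ∧ ∀ a, a ᵥ* G ≠ 0 → d ≤ wt (a ᵥ* G) := by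
  simp only [HasMinDist, mem_span_range_iff_exists_vecMul, exists_exists_eq_and,
    forall_exists_index, forall_apply_eq_imp_iff]

lemma HasMinDist.of_wt_vecMul_eq {G : Matrix ρ ι (ZMod 2)} {H : Matrix ρ κ (ZMod 2)} {c d : ℕ}
    (hG : HasMinDist (Submodule.span (ZMod 2) (Set.range G)) d)
    (hzero : ∀ a, a ᵥ* H = 0 ↔ a ᵥ* G = 0)
    (hwt : ∀ a, a ᵥ* G ≠ 0 → wt (a ᵥ* H) = c + wt (a ᵥ* G)) :
    HasMinDist (Submodule.span (ZMod 2) (Set.range H)) (c + d) := by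
  rw [hasMinDist_span_range_iff] at hG ⊢
  obtain ⟨⟨a, ha, hwa⟩, hmin⟩ := hG
  refine ⟨⟨a, (hzero a).not.mpr ha, by rw [hwt a ha, hwa]⟩, fun b hb => ?_⟩
  have hb' := (hzero b).not.mp hb
  rw [hwt b hb']
  exact Nat.add_le_add_left (hmin b hb') c

end GeneratorMatrix

lemma griesmerBound_mul_two_pow_add (k m d : ℕ) :
    griesmerBound k (m * 2 ^ (k - 1) + d) = m * (2 ^ k - 1) + griesmerBound k d := by
  have hterm : ∀ i ∈ range k, (m * 2 ^ (k - 1) + d + 2 ^ i - 1) / 2 ^ i =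
      m * 2 ^ (k - 1 - i) + (d + 2 ^ i - 1) / 2 ^ i := by
    intro i hi
    have hsplit : 2 ^ (k - 1) = 2 ^ i * 2 ^ (k - 1 - i) := by
      rw [← pow_add]; congr 1; have := mem_range.mp hi; omega
    have hpos : 0 < 2 ^ i := Nat.two_pow_pos i
    rw [hsplit, show m * (2 ^ i * 2 ^ (k - 1 - i)) + d + 2 ^ i - 1 =
        2 ^ i * (m * 2 ^ (k - 1 - i)) + (d + 2 ^ i - 1) by rw [Nat.mul_left_comm]; omega,
      Nat.mul_add_div hpos]
  have hgeom : ∑ i ∈ range k, 2 ^ (k - 1 - i) = 2 ^ k - 1 := by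
    rw [sum_range_reflect (2 ^ ·) k, Nat.geomSum_eq le_rfl, Nat.div_one]
  rw [griesmerBound, griesmerBound, sum_congr rfl hterm, sum_add_distrib, ← mul_sum, hgeom]

theorem stmt1_general (k m n d : ℕ) (hk : 3 ≤ k)
    (S : Fin k → Fin (2 ^ k - 1) → ZMod 2)
    (hS : Set.range (fun j i => S i j) = {v : Fin k → ZMod 2 | v ≠ 0})
    (G : Fin k → Fin n → ZMod 2)
    (hrank : Module.finrank (ZMod 2) (Submodule.span (ZMod 2) (Set.range G)) = k)
    (hmd : HasMinDist (Submodule.span (ZMod 2) (Set.range G)) d) :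
    Module.finrank (ZMod 2) (Submodule.span (ZMod 2)
        (Set.range fun i => Sum.elim (fun p : Fin m × Fin (2 ^ k - 1) => S i p.2) (G i))) = k ∧
    HasMinDist (Submodule.span (ZMod 2)
        (Set.range fun i => Sum.elim (fun p : Fin m × Fin (2 ^ k - 1) => S i p.2) (G i)))
      (m * 2 ^ (k - 1) + d) ∧
    ((SelfOrthogonal (Submodule.span (ZMod 2) (Set.range G)) ∧ n = griesmerBound k d) ↔
      (SelfOrthogonal (Submodule.span (ZMod 2)
          (Set.range fun i => Sum.elim (fun p : Fin m × Fin (2 ^ k - 1) => S i p.2) (G i))) ∧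
        m * (2 ^ k - 1) + n = griesmerBound k (m * 2 ^ (k - 1) + d))) := by
  set H : Fin k → Fin m × Fin (2 ^ k - 1) ⊕ Fin n → ZMod 2 :=
    fun i => Sum.elim (fun p => S i p.2) (G i)
  have hvecMul (a : Fin k → ZMod 2) : a ᵥ* H = Sum.elim (fun p => (a ᵥ* S) p.2) (a ᵥ* G) :=
    vecMul_sumElim a S G
  have hG : Function.Injective fun a : Fin k → ZMod 2 => a ᵥ* G := vecMul_injective_iff.mpr <|
    linearIndependent_iff_card_eq_finrank_span.mpr (by rw [Fintype.card_fin]; exact hrank.symm)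
  have hH : Function.Injective fun a : Fin k → ZMod 2 => a ᵥ* H := fun a b hab =>
    hG (by simpa [hvecMul] using congrArg (· ∘ Sum.inr) hab)
  have hwt (a : Fin k → ZMod 2) (ha : a ᵥ* G ≠ 0) :
      wt (a ᵥ* H) = m * 2 ^ (k - 1) + wt (a ᵥ* G) := by
    have ha0 : a ≠ 0 := by rintro rfl; exact ha (zero_vecMul G)
    rw [hvecMul, wt_sumElim, wt_comp_snd, Fintype.card_fin, wt_vecMul_simplex hS ha0]
  have hdot (a b : Fin k → ZMod 2) : (a ᵥ* H) ⬝ᵥ (b ᵥ* H) = (a ᵥ* G) ⬝ᵥ (b ᵥ* G) := by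
    rw [hvecMul, hvecMul, sumElim_dotProduct_sumElim, dotProduct_comp_snd,
      dotProduct_vecMul_simplex hS hk, smul_zero, zero_add]
  refine ⟨?_, hmd.of_wt_vecMul_eq (fun a => ?_) hwt, ?_⟩
  · exact (finrank_span_eq_card (vecMul_injective_iff.mp hH)).trans (Fintype.card_fin k)
  · exact (hH.eq_iff' (zero_vecMul H)).trans (hG.eq_iff' (zero_vecMul G)).symm
  · rw [selfOrthogonal_span_range_iff G, selfOrthogonal_span_range_iff H]
    simp only [hdot, griesmerBound_mul_two_pow_add, Nat.add_left_cancel_iff]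

theorem stmt1 (k m n d : ℕ) (hk : 3 ≤ k) (hd : 1 ≤ d)
    (S : Fin k → Fin (2 ^ k - 1) → ZMod 2)
    (hS : Set.range (fun j i => S i j) = {v : Fin k → ZMod 2 | v ≠ 0})
    (G : Fin k → Fin n → ZMod 2)
    (hrank : Module.finrank (ZMod 2) (Submodule.span (ZMod 2) (Set.range G)) = k)
    (hmd : HasMinDist (Submodule.span (ZMod 2) (Set.range G)) d) :
    Module.finrank (ZMod 2) (Submodule.span (ZMod 2)
        (Set.range fun i => Sum.elim (fun p : Fin m × Fin (2 ^ k - 1) => S i p.2) (G i))) = k ∧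
    HasMinDist (Submodule.span (ZMod 2)
        (Set.range fun i => Sum.elim (fun p : Fin m × Fin (2 ^ k - 1) => S i p.2) (G i)))
      (m * 2 ^ (k - 1) + d) ∧
    ((SelfOrthogonal (Submodule.span (ZMod 2) (Set.range G)) ∧ n = griesmerBound k d) ↔
      (SelfOrthogonal (Submodule.span (ZMod 2)
          (Set.range fun i => Sum.elim (fun p : Fin m × Fin (2 ^ k - 1) => S i p.2) (G i))) ∧
        m * (2 ^ k - 1) + n = griesmerBound k (m * 2 ^ (k - 1) + d))) :=
  stmt1_general k m n d hk S hS G hrank hmd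
end

section
/- Let C be a binary self-orthogonal [n,k,d] code with k ≥ 2 and d ≡ 2 (mod 4), and let c ∈ C be a codeword with wt(c) = d. Then the residual code Res(C,c), i.e., the image of C under the projection of F_2^n onto the n−d coordinates outside the support of c, is a binary linear code of length n−d and dimension k−1 whose minimum distance is at least d/2 + 1. -/
open Finset

/-!
A codeword vanishing off `supp c` has support inside `supp c`, so by minimality of `wt c = d` it
is `0` or `c`: the projection away from `supp c` has kernel `span {c}` on `C`.
For `x ∈ C \ {0, c}` let `a = overlap x c = |supp x ∩ supp c|` and `w` be the weight of the
projection of `x`. Minimality applied to `x` and `x + c` gives `a + w ≥ d` and `d - a + w ≥ d`,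
so `w ≥ d / 2` and `w ≥ a`. Equality `w = d / 2` would force `a = d / 2`, which is odd as `d ≡ 2 (mod 4)`, whereas
`a ≡ ∑ i, x i * c i = 0 (mod 2)` by self-orthogonality.
-/

section BinaryVectors

variable {ι : Type*} [Fintype ι]

def overlap (x y : ι → ZMod 2) : ℕ :=
  #{i | x i ≠ 0 ∧ y i ≠ 0}

lemma wt_eq_sum (x : ι → ZMod 2) : wt x = ∑ i, if x i ≠ 0 then 1 else 0 :=
  card_filter _ _

lemma overlap_eq_sum (x y : ι → ZMod 2) :
    overlap x y = ∑ i, if x i ≠ 0 ∧ y i ≠ 0 then 1 else 0 :=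
  card_filter _ _

lemma wt_add_add_two_mul_overlap (x y : ι → ZMod 2) :
    wt (x + y) + 2 * overlap x y = wt x + wt y := by
  simp only [wt_eq_sum, overlap_eq_sum, mul_sum, ← sum_add_distrib]
  refine sum_congr rfl fun i _ => ?_
  rw [Pi.add_apply]
  generalize x i = a
  generalize y i = b
  revert a b
  decide

lemma natCast_overlap (x y : ι → ZMod 2) : (overlap x y : ZMod 2) = ∑ i, x i * y i := by
  rw [overlap_eq_sum, Nat.cast_sum]
  refine sum_congr rfl fun i _ => ?_
  generalize x i = a
  generalize y i = b
  revert a b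
  decide

lemma wt_restrict_add_overlap (x c : ι → ZMod 2) :
    wt (fun j : {i // c i = 0} => x j) + overlap x c = wt x := by
  rw [wt_eq_sum, ← sum_subtype {i | c i = 0} (by simp) (fun i => if x i ≠ 0 then 1 else 0),
    sum_filter, overlap_eq_sum, wt_eq_sum, ← sum_add_distrib]
  refine sum_congr rfl fun i _ => ?_
  generalize x i = a
  generalize c i = b
  revert a b
  decide

lemma card_zeros_eq_sub_wt (x : ι → ZMod 2) :
    Fintype.card {i // x i = 0} = Fintype.card ι - wt x := by
  have hsplit := card_filter_add_card_filter_not (s := univ) (fun i => x i = 0)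
  rw [Fintype.card_subtype, wt, ← card_univ]
  simp only [ne_eq] at hsplit ⊢
  omega

lemma eq_of_support_subset_of_wt_le {x c : ι → ZMod 2} (hsupp : ∀ i, c i = 0 → x i = 0)
    (hwt : wt c ≤ wt x) : x = c := by
  have hsub : ({i | x i ≠ 0} : Finset ι) ⊆ ({i | c i ≠ 0} : Finset ι) := by
    intro i
    simpa using mt (hsupp i)
  have hsupp_eq := eq_of_subset_of_card_le hsub hwt
  funext i
  have hi : x i ≠ 0 ↔ c i ≠ 0 := by simpa using congrArg (i ∈ ·) hsupp_eq
  revert hi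
  generalize x i = a
  generalize c i = b
  revert a b
  decide

end BinaryVectors

section ResidualCode

variable {ι : Type*}

/-- `C.map (residualMap c)` is the residual code `Res(C, c)`. -/
abbrev residualMap (c : ι → ZMod 2) : (ι → ZMod 2) →ₗ[ZMod 2] ({i // c i = 0} → ZMod 2) :=
  LinearMap.funLeft (ZMod 2) (ZMod 2) (fun j : {i // c i = 0} => (j : ι))

lemma residualMap_eq_zero_iff {c x : ι → ZMod 2} :
    residualMap c x = 0 ↔ ∀ i, c i = 0 → x i = 0 := by
  simp [funext_iff]

variable [Fintype ι] {C : Submodule (ZMod 2) (ι → ZMod 2)} {c : ι → ZMod 2}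

lemma residualMap_eq_zero_iff_of_mem (hc : c ∈ C) (hmin : ∀ x ∈ C, x ≠ 0 → wt c ≤ wt x)
    {x : ι → ZMod 2} (hx : x ∈ C) : residualMap c x = 0 ↔ x = 0 ∨ x = c := by
  refine ⟨fun h => or_iff_not_imp_left.2 fun hx0 =>
    eq_of_support_subset_of_wt_le (residualMap_eq_zero_iff.1 h) (hmin x hx hx0), ?_⟩
  rintro (rfl | rfl)
  · exact map_zero _
  · exact residualMap_eq_zero_iff.2 fun _ h => h

lemma finrank_map_residualMap_add_one (hc : c ∈ C) (hc0 : c ≠ 0)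
    (hmin : ∀ x ∈ C, x ≠ 0 → wt c ≤ wt x) :
    Module.finrank (ZMod 2) (C.map (residualMap c)) + 1 = Module.finrank (ZMod 2) C := by
  have hker : LinearMap.ker ((residualMap c).domRestrict C) =
      Submodule.span (ZMod 2) {⟨c, hc⟩} := by
    ext ⟨x, hx⟩
    rw [LinearMap.mem_ker, LinearMap.domRestrict_apply, residualMap_eq_zero_iff_of_mem hc hmin hx,
      Submodule.mem_span_singleton]
    constructor
    · rintro (rfl | rfl)
      exacts [⟨0, zero_smul _ _⟩, ⟨1, one_smul _ _⟩]
    · rintro ⟨a, ha⟩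
      have hxa : x = a • c := (congrArg Subtype.val ha).symm
      rcases (by decide : ∀ b : ZMod 2, b = 0 ∨ b = 1) a with rfl | rfl <;> simp [hxa]
  have hrank := LinearMap.finrank_range_add_finrank_ker ((residualMap c).domRestrict C)
  rwa [LinearMap.range_domRestrict, hker,
    finrank_span_singleton (by simpa [Subtype.ext_iff] using hc0)] at hrank

lemma le_wt_residualMap (hso : SelfOrthogonal C) (hc : c ∈ C)
    (hmin : ∀ x ∈ C, x ≠ 0 → wt c ≤ wt x) (hd : wt c % 4 = 2) {x : ι → ZMod 2} (hx : x ∈ C)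
    (hx0 : residualMap c x ≠ 0) : wt c / 2 + 1 ≤ wt (residualMap c x) := by
  have hres : residualMap c (x + c) = residualMap c x := by
    rw [map_add, residualMap_eq_zero_iff.2 fun _ h => h, add_zero]
  have hxc0 : x + c ≠ 0 := fun h => hx0 (by rw [← hres, h, map_zero])
  have hwt_x := hmin x hx (by rintro rfl; exact hx0 (map_zero _))
  have hwt_xc := hmin (x + c) (C.add_mem hx hc) hxc0
  have hsplit := wt_restrict_add_overlap x c
  have hsum := wt_add_add_two_mul_overlap x c
  have heven : 2 ∣ overlap x c :=
    (ZMod.natCast_eq_zero_iff _ 2).1 ((natCast_overlap x c).trans (hso x hx c hc))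
  change wt c / 2 + 1 ≤ wt (fun j : {i // c i = 0} => x j)
  omega

end ResidualCode

theorem stmt2_general (n k d : ℕ) (hd : d % 4 = 2)
    (C : Submodule (ZMod 2) (Fin n → ZMod 2))
    (hdim : Module.finrank (ZMod 2) C = k)
    (hso : SelfOrthogonal C)
    (hmd : HasMinDist C d)
    (c : Fin n → ZMod 2) (hc : c ∈ C) (hwt : wt c = d) :
    Fintype.card {i : Fin n // c i = 0} = n - d ∧
    Module.finrank (ZMod 2)
        (Submodule.map
          (LinearMap.funLeft (ZMod 2) (ZMod 2) (fun j : {i : Fin n // c i = 0} => (j : Fin n)))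
          C) = k - 1 ∧
    ∀ x ∈ Submodule.map
        (LinearMap.funLeft (ZMod 2) (ZMod 2) (fun j : {i : Fin n // c i = 0} => (j : Fin n))) C,
      x ≠ 0 → d / 2 + 1 ≤ wt x := by
  subst hwt
  have hmin : ∀ x ∈ C, x ≠ 0 → wt c ≤ wt x := hmd.2
  have hc0 : c ≠ 0 := by
    rintro rfl
    simp [wt] at hd
  refine ⟨by rw [card_zeros_eq_sub_wt, Fintype.card_fin], ?_, ?_⟩
  · rw [← hdim, ← finrank_map_residualMap_add_one hc hc0 hmin, Nat.add_sub_cancel]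
  · rintro _ ⟨x, hx, rfl⟩ hx0
    exact le_wt_residualMap hso hc hmin hd hx hx0

theorem stmt2 (n k d : ℕ) (hk : 2 ≤ k) (hd : d % 4 = 2)
    (C : Submodule (ZMod 2) (Fin n → ZMod 2))
    (hdim : Module.finrank (ZMod 2) C = k)
    (hso : SelfOrthogonal C)
    (hmd : HasMinDist C d)
    (c : Fin n → ZMod 2) (hc : c ∈ C) (hwt : wt c = d) :
    Fintype.card {i : Fin n // c i = 0} = n - d ∧
    Module.finrank (ZMod 2)
        (Submodule.map
          (LinearMap.funLeft (ZMod 2) (ZMod 2) (fun j : {i : Fin n // c i = 0} => (j : Fin n)))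
          C) = k - 1 ∧
    ∀ x ∈ Submodule.map
        (LinearMap.funLeft (ZMod 2) (ZMod 2) (fun j : {i : Fin n // c i = 0} => (j : Fin n))) C,
      x ≠ 0 → d / 2 + 1 ≤ wt x :=
  stmt2_general n k d hd C hdim hso hmd c hc hwt
end

section
/- Let k ≥ 3 and D ≥ 1 be integers and let C be a binary [N,k,D] Griesmer code (i.e., N = g(k,D)). Then C is self-orthogonal if and only if C is doubly-even, i.e., the weight of every codeword of C is divisible by 4. -/
open Finset

/-!
If `C` is self-orthogonal, every weight and every overlap `wt (x * y)` is even, so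
`u ↦ wt u / 2 (mod 2)` is a linear functional `h` on `C` with `wt u ≡ 2 h(u) (mod 4)`, and `C`
is doubly-even iff `h = 0`. Suppose `h ≠ 0`, and view `C` as the multiset of columns of a
generator matrix, i.e. of functionals on `C`. For a Griesmer code of dimension `k + 1 ≥ 3`, the
Griesmer bound applied to shortened codes shows that some column `v ∉ {0, h}` occurs at least
`⌈d / 2^k⌉` times. Shortening at `v` yields a Griesmer code of dimension `k` with the same
minimum distance, on which `h` is still nonzero and still governs the weights mod 4. Descending
to dimension 2, the three nonzero codewords have weights in `{d, d + 1}`, but one is `≡ 0` and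
two are `≡ 2 (mod 4)`.
-/

lemma griesmerBound_eq_sum_ceilDiv (k d : ℕ) :
    griesmerBound k d = ∑ i ∈ range k, d ⌈/⌉ 2 ^ i := rfl

lemma Nat.lt_ceilDiv_iff_mul_lt {a b c : ℕ} (ha : 0 < a) : c < b ⌈/⌉ a ↔ a * c < b := by
  simpa only [not_le] using (ceilDiv_le_iff_le_mul ha).not

lemma Nat.ceilDiv_ceilDiv {a b d : ℕ} (ha : 0 < a) (hb : 0 < b) :
    d ⌈/⌉ a ⌈/⌉ b = d ⌈/⌉ (a * b) :=
  eq_of_forall_ge_iff fun c => by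
    rw [ceilDiv_le_iff_le_mul hb, ceilDiv_le_iff_le_mul ha,
      ceilDiv_le_iff_le_mul (Nat.mul_pos ha hb), mul_assoc]

lemma griesmerBound_succ (k d : ℕ) :
    griesmerBound (k + 1) d = griesmerBound k d + d ⌈/⌉ 2 ^ k :=
  sum_range_succ _ _

lemma griesmerBound_succ' (k d : ℕ) :
    griesmerBound (k + 1) d = d + griesmerBound k (d ⌈/⌉ 2) := by
  simp only [griesmerBound_eq_sum_ceilDiv, sum_range_succ', pow_zero, ceilDiv_one, add_comm d]
  congr 1
  refine sum_congr rfl fun i _ => ?_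
  rw [Nat.ceilDiv_ceilDiv two_pos (by positivity), pow_succ']

lemma griesmerBound_two (d : ℕ) : griesmerBound 2 d = d + d ⌈/⌉ 2 := by
  simp [griesmerBound_eq_sum_ceilDiv, sum_range_succ]

/-- Termwise, `⌈d / 2^i⌉ ≥ 2^(k-i) a + 1`. -/
lemma mul_add_le_griesmerBound {k a d : ℕ} (h : 2 ^ k * a < d) :
    2 ^ (k + 1) * a + (k + 1) ≤ griesmerBound (k + 1) d + a := by
  induction k generalizing d with
  | zero => simp [griesmerBound_eq_sum_ceilDiv] at h ⊢; omega
  | succ k ih =>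
    have hhalf : 2 ^ k * a < d ⌈/⌉ 2 := by
      rwa [Nat.lt_ceilDiv_iff_mul_lt two_pos, ← mul_assoc, ← pow_succ']
    have := ih hhalf
    rw [griesmerBound_succ']
    have e1 : 2 ^ (k + 1 + 1) * a = 2 * (2 ^ (k + 1) * a) := by ring
    have e2 : 2 ^ (k + 1) * a = 2 * (2 ^ k * a) := by ring
    omega

lemma Multiset.card_filter_eq_sum_map {α : Type*} (p : α → Prop) [DecidablePred p]
    (s : Multiset α) : card (s.filter p) = (s.map fun a => if p a then 1 else 0).sum := by
  induction s using Multiset.induction_on with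
  | empty => simp
  | cons a s ih => by_cases h : p a <;> simp [h, ih, add_comm]

section ColumnMultiset

variable {U : Type*} [AddCommGroup U] [Module (ZMod 2) U]

open Module Multiset

lemma Module.Dual.eq_zero_or_eq_of_ker_le {v h : Dual (ZMod 2) U}
    (hle : LinearMap.ker v ≤ LinearMap.ker h) : h = 0 ∨ h = v := by
  have hmem : h ∈ Submodule.span (ZMod 2) (Set.range fun _ : Unit => v) :=
    mem_span_of_iInf_ker_le_ker (by simpa using hle)
  rw [Set.range_const, Submodule.mem_span_singleton] at hmem
  obtain ⟨c, rfl⟩ := hmem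
  rcases (by decide : ∀ c : ZMod 2, c = 0 ∨ c = 1) c with rfl | rfl <;> simp

lemma Module.Dual.card_eq_two_pow [FiniteDimensional (ZMod 2) U] [Fintype (Dual (ZMod 2) U)] :
    Fintype.card (Dual (ZMod 2) U) = 2 ^ finrank (ZMod 2) U := by
  rw [Module.card_eq_pow_finrank (K := ZMod 2), ZMod.card, Subspace.dual_finrank_eq]

/-- The weight of the message `u` in the binary code whose generator matrix has the
functionals in `s` as columns. -/
def colWeight (s : Multiset (Dual (ZMod 2) U)) (u : U) : ℕ :=
  card (s.filter fun φ => φ u ≠ 0)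

/-- The residual code with respect to `u₀`, restricted to a complement `U'` of `span {u₀}`. -/
def residualCode (s : Multiset (Dual (ZMod 2) U)) (u₀ : U) (U' : Submodule (ZMod 2) U) :
    Multiset (Dual (ZMod 2) U') :=
  (s.filter fun φ => φ u₀ = 0).map fun φ => φ.domRestrict U'

lemma card_residualCode_add_colWeight (s : Multiset (Dual (ZMod 2) U)) (u₀ : U)
    (U' : Submodule (ZMod 2) U) : card (residualCode s u₀ U') + colWeight s u₀ = card s := by
  rw [residualCode, Multiset.card_map, colWeight, ← card_add, filter_add_not]

lemma colWeight_add_colWeight_add (s : Multiset (Dual (ZMod 2) U)) (u₀ : U)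
    {U' : Submodule (ZMod 2) U} (u : U') :
    colWeight s u + colWeight s (u + u₀) =
      2 * colWeight (residualCode s u₀ U') u + colWeight s u₀ := by
  have hres :
      colWeight (residualCode s u₀ U') u =
        card (s.filter fun φ => φ u ≠ 0 ∧ φ u₀ = 0) := by
    simp only [residualCode, colWeight, Multiset.filter_map, Multiset.card_map]
    exact congrArg Multiset.card (Multiset.filter_filter _ _ _)
  rw [hres]
  simp only [colWeight, card_filter_eq_sum_map, ← sum_map_add, ← sum_map_mul_left]
  congr 1
  refine map_congr rfl fun φ _ => ?_
  rw [φ.map_add]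
  generalize φ u₀ = a, φ u = b
  revert a b
  decide

lemma colWeight_add_colWeight_add_colWeight_le (s : Multiset (Dual (ZMod 2) U)) (u v : U) :
    colWeight s u + colWeight s v + colWeight s (u + v) ≤ 2 * card s := by
  have hcard : 2 * card s = (s.map fun _ => 2).sum := by simp [mul_comm]
  simp only [colWeight, card_filter_eq_sum_map, ← sum_map_add, hcard]
  refine sum_map_le_sum_map _ _ fun φ _ => ?_
  rw [φ.map_add]
  generalize φ u = a, φ v = b
  revert a b
  decide

section Shorten

variable [DecidableEq (Dual (ZMod 2) U)]

/-- Shortening at the column `v`: the subcode `ker v`, with the columns equal to `v` deleted. -/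
def shorten (s : Multiset (Dual (ZMod 2) U)) (v : Dual (ZMod 2) U) :
    Multiset (Dual (ZMod 2) (LinearMap.ker v)) :=
  (s.filter (· ≠ v)).map fun φ => φ.domRestrict (LinearMap.ker v)

lemma card_shorten_add_count (s : Multiset (Dual (ZMod 2) U)) (v : Dual (ZMod 2) U) :
    card (shorten s v) + count v s = card s := by
  have := congrArg Multiset.card (Multiset.filter_add_not (· = v) s)
  rw [Multiset.filter_eq', Multiset.card_add, Multiset.card_replicate] at this
  rw [shorten, Multiset.card_map, ← this, add_comm]

lemma colWeight_shorten (s : Multiset (Dual (ZMod 2) U)) (v : Dual (ZMod 2) U)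
    (u : LinearMap.ker v) : colWeight (shorten s v) u = colWeight s u := by
  simp only [shorten, colWeight, filter_map, Multiset.card_map]
  refine (congrArg Multiset.card (Multiset.filter_filter _ _ _)).trans ?_
  congr 1
  refine filter_congr fun φ _ => ⟨fun h => h.1, fun h => ⟨h, ?_⟩⟩
  rintro rfl
  exact h u.2

end Shorten

variable [FiniteDimensional (ZMod 2) U]

/-- Induct via the residual code with respect to a codeword of minimum weight. -/
theorem griesmerBound_le_card (s : Multiset (Dual (ZMod 2) U)) {d : ℕ}
    (hd : ∀ u : U, u ≠ 0 → d ≤ colWeight s u) :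
    griesmerBound (finrank (ZMod 2) U) d ≤ card s := by
  induction hk : finrank (ZMod 2) U generalizing U d with
  | zero => simp [griesmerBound_eq_sum_ceilDiv]
  | succ k ih =>
    have : Nontrivial U := Module.nontrivial_of_finrank_eq_succ hk
    have : Finite U := Module.finite_of_finite (ZMod 2)
    obtain ⟨u₀, hu₀, hmin⟩ :=
      Set.exists_min_image {u : U | u ≠ 0} (colWeight s) (Set.toFinite _) (exists_ne 0)
    obtain ⟨U', hU'⟩ := Submodule.exists_isCompl (ZMod 2 ∙ u₀)
    have hU'k : finrank (ZMod 2) U' = k := by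
      have := Submodule.finrank_add_eq_of_isCompl hU'
      rw [finrank_span_singleton hu₀] at this
      omega
    have hres : ∀ u : U', u ≠ 0 → d ⌈/⌉ 2 ≤ colWeight (residualCode s u₀ U') u := by
      intro u hu
      have hu' : (u : U) ≠ 0 := by simpa using hu
      have hu₀' : (u : U) + u₀ ≠ 0 := by
        intro h
        have hmem : (u : U) ∈ ZMod 2 ∙ u₀ := by
          rw [eq_neg_of_add_eq_zero_left h]
          exact neg_mem (Submodule.mem_span_singleton_self u₀)
        exact hu' ((Submodule.disjoint_def.mp hU'.disjoint) _ hmem u.2)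
      have := colWeight_add_colWeight_add s u₀ u
      have := hmin _ hu'
      have := hmin _ hu₀'
      have := hd _ hu₀
      rw [ceilDiv_le_iff_le_mul two_pos]
      omega
    have := ih (residualCode s u₀ U') hres hU'k
    have := card_residualCode_add_colWeight s u₀ U'
    have := hd _ hu₀
    rw [griesmerBound_succ']
    omega

lemma count_add_griesmerBound_le [DecidableEq (Dual (ZMod 2) U)]
    (s : Multiset (Dual (ZMod 2) U)) {d : ℕ} (hd : ∀ u : U, u ≠ 0 → d ≤ colWeight s u)
    (v : Dual (ZMod 2) U) :
    count v s + griesmerBound (finrank (ZMod 2) (LinearMap.ker v)) d ≤ card s := by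
  have := griesmerBound_le_card (shorten s v) (d := d) fun u hu => by
    rw [colWeight_shorten]
    exact hd u (by simpa using hu)
  have := card_shorten_add_count s v
  omega

lemma count_zero_eq_zero [DecidableEq (Dual (ZMod 2) U)] (s : Multiset (Dual (ZMod 2) U))
    {d : ℕ} (hd : ∀ u : U, u ≠ 0 → d ≤ colWeight s u)
    (hs : card s ≤ griesmerBound (finrank (ZMod 2) U) d) : count 0 s = 0 := by
  have := count_add_griesmerBound_le s hd 0
  rw [LinearMap.ker_zero, finrank_top] at this
  omega

lemma count_le_ceilDiv [DecidableEq (Dual (ZMod 2) U)] (s : Multiset (Dual (ZMod 2) U))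
    {k d : ℕ} (hU : finrank (ZMod 2) U = k + 1) (hd : ∀ u : U, u ≠ 0 → d ≤ colWeight s u)
    (hs : card s ≤ griesmerBound (k + 1) d) {v : Dual (ZMod 2) U} (hv : v ≠ 0) :
    count v s ≤ d ⌈/⌉ 2 ^ k := by
  have := count_add_griesmerBound_le s hd v
  have hker := Module.Dual.finrank_ker_add_one_of_ne_zero hv
  rw [hU, Nat.add_right_cancel_iff] at hker
  rw [hker] at this
  rw [griesmerBound_succ] at hs
  omega

lemma exists_ne_ne_ceilDiv_le_count [DecidableEq (Dual (ZMod 2) U)]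
    (s : Multiset (Dual (ZMod 2) U)) {k d : ℕ} (hU : finrank (ZMod 2) U = k + 1) (hk : 1 ≤ k)
    (hd1 : 1 ≤ d) (hd : ∀ u : U, u ≠ 0 → d ≤ colWeight s u)
    (hs : card s ≤ griesmerBound (k + 1) d) {h : Dual (ZMod 2) U} (hh : h ≠ 0) :
    ∃ v, v ≠ 0 ∧ v ≠ h ∧ d ⌈/⌉ 2 ^ k ≤ count v s := by
  have : Finite (Dual (ZMod 2) U) := Module.finite_of_finite (ZMod 2)
  have : Fintype (Dual (ZMod 2) U) := Fintype.ofFinite _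
  set A := d ⌈/⌉ 2 ^ k
  set R := (Finset.univ : Finset (Dual (ZMod 2) U)) \ {0, h}
  have hR : R.card + 2 = 2 ^ (k + 1) := by
    rw [Finset.card_sdiff_of_subset (Finset.subset_univ _), Finset.card_univ,
      Finset.card_pair hh.symm, Module.Dual.card_eq_two_pow, hU]
    have : 2 ≤ 2 ^ (k + 1) := Nat.le_self_pow (by omega) 2
    omega
  have hcount0 := count_zero_eq_zero s hd (hU ▸ hs)
  have hcounth := count_le_ceilDiv s hU hd hs hh
  have hsplit : ∑ φ ∈ R, count φ s + (count 0 s + count h s) = card s := by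
    rw [← Finset.sum_pair (f := fun φ => count φ s) hh.symm,
      Finset.sum_sdiff (Finset.subset_univ _), sum_count_eq_card fun _ _ => Finset.mem_univ _]
  have hA : 2 ^ k * (A - 1) < d := by
    have : 0 < A := (Nat.lt_ceilDiv_iff_mul_lt (by positivity)).2 (by omega)
    exact (Nat.lt_ceilDiv_iff_mul_lt (by positivity)).1 (by omega)
  have hlow := mul_add_le_griesmerBound hA
  have hgr := griesmerBound_le_card s hd
  rw [hU] at hgr
  have hRA : ∑ _φ ∈ R, (A - 1) < ∑ φ ∈ R, count φ s := by
    rw [Finset.sum_const, smul_eq_mul]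
    rw [← hR, add_mul] at hlow
    omega
  obtain ⟨v, hv, hAv⟩ := Finset.exists_lt_of_sum_lt hRA
  simp only [R, Finset.mem_sdiff, Finset.mem_univ, Finset.mem_insert, Finset.mem_singleton,
    true_and, not_or] at hv
  exact ⟨v, hv.1, hv.2, by omega⟩

lemma exists_colWeight_mod_four_ne_of_finrank_eq_two (s : Multiset (Dual (ZMod 2) U)) {d : ℕ}
    (hU : finrank (ZMod 2) U = 2) (hd : ∀ u : U, u ≠ 0 → d ≤ colWeight s u)
    (hs : card s ≤ griesmerBound 2 d) {h : Dual (ZMod 2) U} (hh : h ≠ 0) :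
    ∃ u, colWeight s u % 4 ≠ 2 * (h u).val := by
  obtain ⟨u₁, hu₁⟩ := LinearMap.range_eq_top.1 (Module.Dual.range_eq_top_of_ne_zero hh) 1
  have hker := Module.Dual.finrank_ker_add_one_of_ne_zero hh
  have : Nontrivial (LinearMap.ker h) := Module.nontrivial_of_finrank_pos (R := ZMod 2) (by omega)
  obtain ⟨⟨u₂, hu₂⟩, hu₂0⟩ := exists_ne (0 : LinearMap.ker h)
  rw [LinearMap.mem_ker] at hu₂
  have hne : ∀ u, h u = 1 → u ≠ 0 := by
    rintro u hu rfl
    simp at hu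
  by_contra! hmod
  have h₁ := hmod u₁
  have h₂ := hmod u₂
  rw [hu₁, ZMod.val_one] at h₁
  rw [hu₂, ZMod.val_zero] at h₂
  have := hd _ (hne _ hu₁)
  have := hd u₂ (by simpa using hu₂0)
  have := hd _ (hne (u₁ + u₂) (by simp [hu₁, hu₂]))
  have := colWeight_add_colWeight_add_colWeight_le s u₁ u₂
  rw [griesmerBound_two, Nat.ceilDiv_eq_add_pred_div] at hs
  omega

theorem exists_colWeight_mod_four_ne (s : Multiset (Dual (ZMod 2) U)) {d : ℕ}
    (hU : 2 ≤ finrank (ZMod 2) U) (hd1 : 1 ≤ d)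
    (hd : ∀ u : U, u ≠ 0 → d ≤ colWeight s u)
    (hs : card s ≤ griesmerBound (finrank (ZMod 2) U) d) {h : Dual (ZMod 2) U} (hh : h ≠ 0) :
    ∃ u, colWeight s u % 4 ≠ 2 * (h u).val := by
  classical
  obtain ⟨k, hk⟩ := Nat.exists_eq_add_of_le' hU
  rw [hk] at hs
  induction k generalizing U with
  | zero => exact exists_colWeight_mod_four_ne_of_finrank_eq_two s hk hd hs hh
  | succ k ih =>
    obtain ⟨v, hv0, hvh, hAv⟩ :=
      exists_ne_ne_ceilDiv_le_count s hk (by omega) hd1 hd hs hh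
    have hker := Module.Dual.finrank_ker_add_one_of_ne_zero hv0
    rw [hk, Nat.add_right_cancel_iff] at hker
    have hh' : h.domRestrict (LinearMap.ker v) ≠ 0 := by
      intro h0
      refine (Module.Dual.eq_zero_or_eq_of_ker_le fun x hx => ?_).elim hh hvh.symm
      simpa using LinearMap.congr_fun h0 ⟨x, hx⟩
    have hs' : card (shorten s v) ≤ griesmerBound (k + 2) d := by
      have := card_shorten_add_count s v
      rw [griesmerBound_succ] at hs
      omega
    obtain ⟨u, hu⟩ := ih (shorten s v) (by omega) (fun u hu => by
      rw [colWeight_shorten]; exact hd u (by simpa using hu)) hh' hs' hker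
    exact ⟨u, by simpa [colWeight_shorten] using hu⟩

end ColumnMultiset

section BinaryCode

variable {ι : Type*} [Fintype ι]

lemma natCast_wt (x : ι → ZMod 2) : (wt x : ZMod 2) = ∑ i, x i := by
  rw [wt_eq_sum, Nat.cast_sum]
  refine Finset.sum_congr rfl fun i _ => ?_
  generalize x i = a
  revert a
  decide

lemma wt_add_add_two_mul_wt_mul (x y : ι → ZMod 2) :
    wt (x + y) + 2 * wt (x * y) = wt x + wt y := by
  simp only [wt_eq_sum, Finset.mul_sum, ← Finset.sum_add_distrib]
  refine Finset.sum_congr rfl fun i _ => ?_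
  have key : ∀ a b : ZMod 2, ((if a + b ≠ 0 then 1 else 0) + 2 * if a * b ≠ 0 then 1 else 0) =
      (if a ≠ 0 then 1 else 0) + if b ≠ 0 then 1 else 0 := by decide
  exact key (x i) (y i)

lemma wt_mul_self (x : ι → ZMod 2) : wt (x * x) = wt x := by
  simp only [wt_eq_sum, Pi.mul_apply]
  refine Finset.sum_congr rfl fun i _ => ?_
  have key : ∀ a : ZMod 2, (if a * a ≠ 0 then 1 else 0) = if a ≠ 0 then 1 else 0 := by decide
  exact key (x i)

lemma selfOrthogonal_iff_two_dvd_wt_mul {C : Submodule (ZMod 2) (ι → ZMod 2)} :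
    SelfOrthogonal C ↔ ∀ x ∈ C, ∀ y ∈ C, 2 ∣ wt (x * y) := by
  simp only [SelfOrthogonal, ← ZMod.natCast_eq_zero_iff, natCast_wt, Pi.mul_apply]

lemma selfOrthogonal_of_forall_four_dvd_wt {C : Submodule (ZMod 2) (ι → ZMod 2)}
    (hC : ∀ x ∈ C, 4 ∣ wt x) : SelfOrthogonal C := by
  refine selfOrthogonal_iff_two_dvd_wt_mul.2 fun x hx y hy => ?_
  have := wt_add_add_two_mul_wt_mul x y
  have := hC x hx
  have := hC y hy
  have := hC _ (C.add_mem hx hy)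
  omega

namespace SelfOrthogonal

variable {C : Submodule (ZMod 2) (ι → ZMod 2)} (hC : SelfOrthogonal C)
include hC

lemma two_dvd_wt {x : ι → ZMod 2} (hx : x ∈ C) : 2 ∣ wt x :=
  wt_mul_self x ▸ selfOrthogonal_iff_two_dvd_wt_mul.1 hC x hx x hx

/-- Half the weight, modulo `2`, is linear on a self-orthogonal code, since
`wt (x + y) = wt x + wt y - 2 wt (x * y)` with all three weights even. -/
def halfWeight : Module.Dual (ZMod 2) C :=
  AddMonoidHom.toZModLinearMap 2 <|
    AddMonoidHom.mk' (fun u => ((wt (u : ι → ZMod 2) / 2 : ℕ) : ZMod 2))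
    fun u v => by
      have := wt_add_add_two_mul_wt_mul (u : ι → ZMod 2) v
      have := hC.two_dvd_wt u.2
      have := hC.two_dvd_wt v.2
      have := selfOrthogonal_iff_two_dvd_wt_mul.1 hC u u.2 v v.2
      rw [← Nat.cast_add, ZMod.natCast_eq_natCast_iff', Submodule.coe_add]
      omega

lemma wt_mod_four (u : C) : wt (u : ι → ZMod 2) % 4 = 2 * (hC.halfWeight u).val := by
  have := hC.two_dvd_wt u.2
  simp only [halfWeight, AddMonoidHom.coe_toZModLinearMap, AddMonoidHom.mk'_apply,
    ZMod.val_natCast]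
  omega

end SelfOrthogonal

def columns (C : Submodule (ZMod 2) (ι → ZMod 2)) : Multiset (Module.Dual (ZMod 2) C) :=
  Finset.univ.val.map fun j => (LinearMap.proj j).comp C.subtype

lemma card_columns (C : Submodule (ZMod 2) (ι → ZMod 2)) :
    Multiset.card (columns C) = Fintype.card ι := by
  simp [columns]

lemma colWeight_columns (C : Submodule (ZMod 2) (ι → ZMod 2)) (u : C) :
    colWeight (columns C) u = wt (u : ι → ZMod 2) := by
  simp only [colWeight, columns, Multiset.filter_map, Multiset.card_map]
  rfl

end BinaryCode

theorem stmt3 (N k D : ℕ) (hk : 3 ≤ k) (hD : 1 ≤ D)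
    (C : Submodule (ZMod 2) (Fin N → ZMod 2))
    (hdim : Module.finrank (ZMod 2) C = k)
    (hmd : HasMinDist C D)
    (hg : N = griesmerBound k D) :
    SelfOrthogonal C ↔ ∀ x ∈ C, 4 ∣ wt x := by
  refine ⟨fun hC x hx => ?_, selfOrthogonal_of_forall_four_dvd_wt⟩
  have hq : hC.halfWeight = 0 := by
    by_contra hq
    obtain ⟨u, hu⟩ := exists_colWeight_mod_four_ne (columns C) (by omega) hD
      (fun u hu => colWeight_columns C u ▸ hmd.2 u u.2 (by simpa using hu))
      (by rw [card_columns, Fintype.card_fin, hdim, hg]) hq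
    exact hu (colWeight_columns C u ▸ hC.wt_mod_four u)
  have : wt x % 4 = _ := hC.wt_mod_four ⟨x, hx⟩
  rw [hq, LinearMap.zero_apply, ZMod.val_zero] at this
  omega
end

section
/- Let N, k, D be integers with N > 2^k and D > 2, and suppose there exists a binary self-orthogonal [N,k,D] code. Then there exists a binary self-orthogonal [N−2, k] code with minimum distance at least D−2. -/
/-! Since `2 ^ k < N`, the `N` coordinate functionals restricted to a `k`-dimensional code
cannot be pairwise distinct, so two coordinates `i ≠ j` agree on every codeword. Deleting them
preserves self-orthogonality, because the two dropped terms of each inner product are equal and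
cancel in characteristic 2, and lowers every weight by at most 2. As `D > 2`, no nonzero codeword
is punctured to zero, so the dimension stays `k`. -/

open Finset

theorem Submodule.exists_ne_forall_mem_apply_eq_of_card_lt {K ι : Type*} [Field K] [Finite K]
    [Finite ι] (C : Submodule K (ι → K)) (h : Nat.card K ^ Module.finrank K C < Nat.card ι) :
    ∃ i j, i ≠ j ∧ ∀ x ∈ C, x i = x j := by
  have : Finite (Module.Dual K C) := Module.finite_of_finite K
  let ev : ι → Module.Dual K C := fun i => (LinearMap.proj i).comp C.subtype
  have hcard : Nat.card (Module.Dual K C) < Nat.card ι := by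
    rwa [Module.natCard_eq_pow_finrank (K := K), Subspace.dual_finrank_eq]
  obtain ⟨i, j, hev, hij⟩ := Function.not_injective_iff.mp fun hinj =>
    (Nat.card_le_card_of_injective ev hinj).not_gt hcard
  exact ⟨i, j, hij, fun x hx => LinearMap.congr_fun hev ⟨x, hx⟩⟩

theorem Finset.sum_compl_pair_of_eq {ι R : Type*} [Fintype ι] [DecidableEq ι] [Ring R]
    [CharP R 2] {f : ι → R} {i j : ι} (hij : i ≠ j) (h : f i = f j) :
    ∑ a ∈ ({i, j} : Finset ι)ᶜ, f a = ∑ a, f a := by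
  rw [← Finset.sum_add_sum_compl {i, j} f, Finset.sum_pair hij, h, CharTwo.add_self_eq_zero,
    zero_add]

section Puncturing

variable {ι κ : Type*} [Fintype ι] [Fintype κ]

theorem wt_le_wt_comp_add (x : ι → ZMod 2) (e : κ ↪ ι) :
    wt x ≤ wt (x ∘ e) + (Fintype.card ι - Fintype.card κ) := by
  classical
  have hsub : univ.filter (x · ≠ 0) ⊆
      (univ.filter (fun m => x (e m) ≠ 0)).map e ∪ (univ.map e)ᶜ := by
    intro a ha
    by_cases hae : a ∈ univ.map e
    · obtain ⟨m, -, rfl⟩ := mem_map.mp hae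
      exact mem_union_left _ (mem_map_of_mem e (by simpa using ha))
    · exact mem_union_right _ (mem_compl.mpr hae)
  calc wt x ≤ #((univ.filter (fun m => x (e m) ≠ 0)).map e ∪ (univ.map e)ᶜ) :=
        card_le_card hsub
    _ ≤ #((univ.filter (fun m => x (e m) ≠ 0)).map e) + #(univ.map e)ᶜ := card_union_le _ _
    _ = wt (x ∘ e) + (Fintype.card ι - Fintype.card κ) := by
      rw [card_map, card_compl, card_map, card_univ]; rfl

variable (C : Submodule (ZMod 2) (ι → ZMod 2)) (e : κ ↪ ι)

theorem Submodule.finrank_map_funLeft_of_lt_wt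
    (h : ∀ x ∈ C, x ≠ 0 → Fintype.card ι - Fintype.card κ < wt x) :
    Module.finrank (ZMod 2) (C.map (LinearMap.funLeft (ZMod 2) (ZMod 2) e)) =
      Module.finrank (ZMod 2) C := by
  set f := LinearMap.funLeft (ZMod 2) (ZMod 2) e
  have hrange : C.map f = LinearMap.range (f ∘ₗ C.subtype) := by
    rw [LinearMap.range_comp, Submodule.range_subtype]
  have hinj : Function.Injective (f ∘ₗ C.subtype) := by
    refine (injective_iff_map_eq_zero _).mpr fun c hc => ?_
    by_contra hc0
    have hle := wt_le_wt_comp_add (c : ι → ZMod 2) e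
    have hlt := h c c.2 (by simpa using hc0)
    have hwt : wt ((c : ι → ZMod 2) ∘ e) = 0 := by
      change wt (f c) = 0
      rw [show f c = 0 from hc]
      simp [wt]
    omega
  rw [hrange, LinearMap.finrank_range_of_inj hinj]

theorem Submodule.sub_le_wt_of_mem_map_funLeft {d : ℕ} (h : ∀ x ∈ C, x ≠ 0 → d ≤ wt x) :
    ∀ y ∈ C.map (LinearMap.funLeft (ZMod 2) (ZMod 2) e), y ≠ 0 →
      d - (Fintype.card ι - Fintype.card κ) ≤ wt y := by
  rintro _ ⟨x, hx, rfl⟩ hy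
  have hx0 : x ≠ 0 := by rintro rfl; exact hy (map_zero _)
  have hd := h x hx hx0
  have hle : wt x ≤ wt (LinearMap.funLeft (ZMod 2) (ZMod 2) e x) + _ := wt_le_wt_comp_add x e
  omega

variable {C} in
theorem SelfOrthogonal.map_funLeft [DecidableEq ι] (hC : SelfOrthogonal C) {i j : ι}
    (hij : i ≠ j) (he : univ.map e = {i, j}ᶜ) (hagree : ∀ x ∈ C, x i = x j) :
    SelfOrthogonal (C.map (LinearMap.funLeft (ZMod 2) (ZMod 2) e)) := by
  rintro _ ⟨x, hx, rfl⟩ _ ⟨y, hy, rfl⟩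
  calc ∑ m, x (e m) * y (e m) = ∑ a ∈ univ.map e, x a * y a :=
        (sum_map univ e fun a => x a * y a).symm
    _ = ∑ a, x a * y a := by
      rw [he]
      exact sum_compl_pair_of_eq hij (by rw [hagree x hx, hagree y hy])
    _ = 0 := hC x hx y hy

end Puncturing

theorem stmt8 (N k D : ℕ) (hN : 2 ^ k < N) (hD : 2 < D)
    (hex : ∃ C : Submodule (ZMod 2) (Fin N → ZMod 2),
      Module.finrank (ZMod 2) C = k ∧ SelfOrthogonal C ∧ HasMinDist C D) :
    ∃ C : Submodule (ZMod 2) (Fin (N - 2) → ZMod 2),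
      Module.finrank (ZMod 2) C = k ∧ SelfOrthogonal C ∧
      ∀ x ∈ C, x ≠ 0 → D - 2 ≤ wt x := by
  obtain ⟨C, hrk, hso, -, hmin⟩ := hex
  obtain ⟨i, j, hij, hagree⟩ :=
    C.exists_ne_forall_mem_apply_eq_of_card_lt (by simpa [hrk] using hN)
  have hcard : #({i, j}ᶜ : Finset (Fin N)) = N - 2 := by
    rw [card_compl, card_pair hij, Fintype.card_fin]
  let e := (({i, j}ᶜ : Finset (Fin N)).orderEmbOfFin hcard).toEmbedding
  have hdiff : Fintype.card (Fin N) - Fintype.card (Fin (N - 2)) = 2 := by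
    have : 1 ≤ 2 ^ k := Nat.one_le_two_pow
    simp only [Fintype.card_fin]
    omega
  refine ⟨C.map (LinearMap.funLeft _ _ e), ?_,
    hso.map_funLeft e hij (map_orderEmbOfFin_univ _ hcard) hagree, ?_⟩
  · refine (C.finrank_map_funLeft_of_lt_wt e fun x hx hx0 => ?_).trans hrk
    rw [hdiff]
    exact hD.trans_le (hmin x hx hx0)
  · simpa only [hdiff] using C.sub_le_wt_of_mem_map_funLeft e hmin
end

section
/- There is no binary self-orthogonal [110,7,54] code; that is, no 7-dimensional self-orthogonal subspace of F_2^110 has minimum distance 54. -/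
open Finset

/-!
In a self-orthogonal binary code every weight is even and `wt (x + y) ≡ wt x + wt y (mod 4)`,
so `x ↦ wt x / 2 (mod 2)` is linear and its kernel, the doubly-even subcode, has index 2 as soon
as some weight is `≡ 2 (mod 4)`, as 54 is. For a `[110, 7, 54]` code this subcode has 64
codewords, all nonzero ones of weight at least 56, and it violates the Plotkin bound
`2 d (|D| - 1) ≤ n |D|`: `2 · 56 · 63 = 7056 > 7040 = 110 · 64`.
-/

section Weight

variable {ι : Type*} [Fintype ι]

lemma sum_mul_eq_card_inter (x y : ι → ZMod 2) :
    ∑ i, x i * y i = (#{i | x i ≠ 0 ∧ y i ≠ 0} : ZMod 2) := by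
  have key : ∀ a b : ZMod 2, a * b = if a ≠ 0 ∧ b ≠ 0 then 1 else 0 := by decide
  rw [card_filter]
  push_cast
  exact sum_congr rfl fun i _ => key (x i) (y i)

lemma wt_add_add_two_mul_card_inter (x y : ι → ZMod 2) :
    wt (x + y) + 2 * #{i | x i ≠ 0 ∧ y i ≠ 0} = wt x + wt y := by
  have key : ∀ a b : ZMod 2, ((if a + b ≠ 0 then 1 else 0) +
      2 * if a ≠ 0 ∧ b ≠ 0 then 1 else 0) = (if a ≠ 0 then 1 else 0) + if b ≠ 0 then 1 else 0 := by
    decide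
  simp only [wt, card_filter, mul_sum, ← sum_add_distrib]
  exact sum_congr rfl fun i _ => key (x i) (y i)

end Weight

lemma AddMonoidHom.two_mul_card_ne_zero_le {G : Type*} [AddGroup G] [Fintype G]
    (f : G →+ ZMod 2) : 2 * #{g | f g ≠ 0} ≤ Fintype.card G := by
  have hsplit := card_filter_add_card_filter_not (s := univ) fun g => f g ≠ 0
  suffices #{g | f g ≠ 0} ≤ #{g | ¬f g ≠ 0} by rw [card_univ] at hsplit; omega
  by_cases hf : ∃ a, f a ≠ 0
  · obtain ⟨a, ha⟩ := hf
    have hsum : ∀ b c : ZMod 2, b ≠ 0 → c ≠ 0 → b + c = 0 := by decide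
    refine card_le_card_of_injOn (· + a) (fun g hg => ?_) (add_left_injective a).injOn
    simp only [coe_filter, mem_univ, true_and, Set.mem_ofPred_eq, map_add, not_not] at hg ⊢
    exact hsum _ _ hg ha
  · simp_all

namespace AddSubgroup

variable {ι : Type*} [Fintype ι]

lemma two_mul_sum_wt_le (D : AddSubgroup (ι → ZMod 2)) [Fintype D] :
    2 * ∑ x : D, wt (x : ι → ZMod 2) ≤ Fintype.card ι * Fintype.card D := by
  have hswap : ∑ x : D, wt (x : ι → ZMod 2) = ∑ i, #{x : D | (x : ι → ZMod 2) i ≠ 0} := by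
    simp only [wt, card_filter]
    exact sum_comm
  rw [hswap]
  calc 2 * ∑ i, #{x : D | (x : ι → ZMod 2) i ≠ 0}
      ≤ ∑ _i : ι, Fintype.card D := by
        rw [mul_sum]
        exact sum_le_sum fun i _ =>
          ((Pi.evalAddMonoidHom _ i).comp D.subtype).two_mul_card_ne_zero_le
    _ = Fintype.card ι * Fintype.card D := by simp

theorem plotkin_bound (D : AddSubgroup (ι → ZMod 2)) {d : ℕ}
    (hd : ∀ x ∈ D, x ≠ 0 → d ≤ wt x) :
    2 * d * (Nat.card D - 1) ≤ Fintype.card ι * Nat.card D := by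
  classical
  rw [Nat.card_eq_fintype_card]
  have hlow : (Fintype.card D - 1) * d ≤ ∑ x : D, wt (x : ι → ZMod 2) := by
    calc (Fintype.card D - 1) * d = #(univ.erase (0 : D)) • d := by
          rw [card_erase_of_mem (mem_univ _), card_univ, smul_eq_mul]
      _ ≤ ∑ x ∈ univ.erase (0 : D), wt (x : ι → ZMod 2) :=
          card_nsmul_le_sum _ _ _ fun x hx =>
            hd x x.2 (by simpa [← ZeroMemClass.coe_eq_zero] using ne_of_mem_erase hx)
      _ ≤ ∑ x : D, wt (x : ι → ZMod 2) := sum_le_sum_of_subset (erase_subset _ _)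
  have := D.two_mul_sum_wt_le
  nlinarith

end AddSubgroup

namespace SelfOrthogonal

variable {ι : Type*} [Fintype ι] {C : Submodule (ZMod 2) (ι → ZMod 2)}

lemma even_card_inter (hC : SelfOrthogonal C) {x y : ι → ZMod 2} (hx : x ∈ C) (hy : y ∈ C) :
    Even #{i | x i ≠ 0 ∧ y i ≠ 0} :=
  ZMod.natCast_eq_zero_iff_even.mp (sum_mul_eq_card_inter x y ▸ hC x hx y hy)

lemma even_wt (hC : SelfOrthogonal C) {x : ι → ZMod 2} (hx : x ∈ C) : Even (wt x) := by
  simpa [wt] using hC.even_card_inter hx hx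

/-- Additive because `wt (x + y) = wt x + wt y - 2 * #(supp x ∩ supp y)` with all three terms
even on a self-orthogonal code. -/
def halfWt (hC : SelfOrthogonal C) : C →+ ZMod 2 where
  toFun x := ((wt (x : ι → ZMod 2) / 2 : ℕ) : ZMod 2)
  map_zero' := by simp [wt]
  map_add' x y := by
    rw [Submodule.coe_add]
    have hsum := wt_add_add_two_mul_card_inter (x : ι → ZMod 2) y
    obtain ⟨a, ha⟩ := hC.even_card_inter x.2 y.2
    obtain ⟨b, hb⟩ := hC.even_wt x.2
    obtain ⟨c, hc⟩ := hC.even_wt y.2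
    have hhalf : wt ((x : ι → ZMod 2) + (y : ι → ZMod 2)) / 2 + 2 * a =
        wt (x : ι → ZMod 2) / 2 + wt (y : ι → ZMod 2) / 2 := by
      omega
    simpa [show (2 : ZMod 2) = 0 from rfl] using congrArg (Nat.cast : ℕ → ZMod 2) hhalf

lemma halfWt_eq_zero_iff (hC : SelfOrthogonal C) (x : C) :
    hC.halfWt x = 0 ↔ 4 ∣ wt (x : ι → ZMod 2) := by
  obtain ⟨b, hb⟩ := hC.even_wt x.2
  change ((wt (x : ι → ZMod 2) / 2 : ℕ) : ZMod 2) = 0 ↔ _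
  rw [ZMod.natCast_eq_zero_iff_even, hb, Nat.even_iff]
  omega

def doublyEvenSubcode (hC : SelfOrthogonal C) : AddSubgroup (ι → ZMod 2) :=
  hC.halfWt.ker.map C.subtype.toAddMonoidHom

lemma mem_doublyEvenSubcode (hC : SelfOrthogonal C) {x : ι → ZMod 2} :
    x ∈ hC.doublyEvenSubcode ↔ x ∈ C ∧ 4 ∣ wt x := by
  simp [doublyEvenSubcode, halfWt_eq_zero_iff, and_comm]

lemma two_mul_card_doublyEvenSubcode (hC : SelfOrthogonal C) {x : ι → ZMod 2} (hx : x ∈ C)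
    (hwt : wt x % 4 = 2) : 2 * Nat.card hC.doublyEvenSubcode = Nat.card C := by
  have hsurj : Function.Surjective hC.halfWt := by
    have hx1 : hC.halfWt ⟨x, hx⟩ ≠ 0 := by
      rw [Ne, halfWt_eq_zero_iff]
      change ¬4 ∣ wt x
      omega
    intro c
    fin_cases c
    · exact ⟨0, map_zero _⟩
    · exact ⟨⟨x, hx⟩, (Fin.eq_one_of_ne_zero _ hx1).trans rfl⟩
  rw [doublyEvenSubcode, AddSubgroup.card_map_of_injective C.injective_subtype,
    ← hC.halfWt.ker.card_mul_index, AddSubgroup.index_ker,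
    AddMonoidHom.range_eq_top_of_surjective _ hsurj, AddSubgroup.card_top, Nat.card_zmod, mul_comm]

end SelfOrthogonal

theorem stmt15 :
    ¬ ∃ C : Submodule (ZMod 2) (Fin 110 → ZMod 2),
      Module.finrank (ZMod 2) C = 7 ∧ SelfOrthogonal C ∧ HasMinDist C 54 := by
  rintro ⟨C, hrank, hC, ⟨x, hxC, -, hwt⟩, hmin⟩
  have hcardC : Nat.card C = 2 ^ 7 := by
    rw [Module.natCard_eq_pow_finrank (K := ZMod 2), Nat.card_zmod, hrank]
  have hcardD : Nat.card hC.doublyEvenSubcode = 64 := by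
    have := hC.two_mul_card_doublyEvenSubcode hxC (by rw [hwt])
    omega
  have hdist : ∀ y ∈ hC.doublyEvenSubcode, y ≠ 0 → 56 ≤ wt y := by
    intro y hy hy0
    rw [hC.mem_doublyEvenSubcode] at hy
    have := hmin y hy.1 hy0
    omega
  have hplotkin := hC.doublyEvenSubcode.plotkin_bound hdist
  rw [hcardD, Fintype.card_fin] at hplotkin
  omega
end
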